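/- arXiv:2008.06158 — 10 statements merged into one kernel-verified Lean document; each statement's English description precedes it below -/
import Mathlib

section
/- Suppose A = diag(a₀,a₁,a₂) with 0 < a₀ < a₁ < a₂, and let x = (x₀,x₁,x₂) satisfy -x₀² + x₁² + x₂² = 1 and x₀x₁x₂ ≠ 0. Then the equation -x₀²/(a₀-λ) + x₁²/(a₁-λ) + x₂²/(a₂-λ) = 0 has exactly two real roots λ₁ < λ₂, and they satisfy λ₁ < a₀ < a₁ < λ₂ < a₂. -/
/-- For `0 < a₀ < a₁ < a₂` and `x` on the hyperboloid of one sheet with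
`x₀x₁x₂ ≠ 0`, the confocal family equation has exactly two real roots
`λ₁ < a₀ < a₁ < λ₂ < a₂`. -/
theorem stmt_1 (a0 a1 a2 x0 x1 x2 : ℝ)
    (ha0 : 0 < a0) (ha01 : a0 < a1) (ha12 : a1 < a2)
    (hx : -x0^2 + x1^2 + x2^2 = 1) (hxyz : x0 * x1 * x2 ≠ 0) :
    ∃ l1 l2 : ℝ, l1 < l2 ∧ l1 < a0 ∧ a1 < l2 ∧ l2 < a2 ∧
      ∀ l : ℝ, l ≠ a0 → l ≠ a1 → l ≠ a2 →
        ((-x0^2 / (a0 - l) + x1^2 / (a1 - l) + x2^2 / (a2 - l) = 0) ↔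
          (l = l1 ∨ l = l2)) := by
  have hx0 : x0 ≠ 0 := fun h => hxyz (by simp [h])
  have hx1 : x1 ≠ 0 := fun h => hxyz (by simp [h])
  have hx2 : x2 ≠ 0 := fun h => hxyz (by simp [h])
  have hx0' : 0 < x0^2 := by positivity
  have hx1' : 0 < x1^2 := by positivity
  have hx2' : 0 < x2^2 := by positivity
  obtain ⟨B, hB⟩ : ∃ B : ℝ, B = x0^2*(a1+a2) - x1^2*(a0+a2) - x2^2*(a0+a1) := ⟨_, rfl⟩
  obtain ⟨C, hC⟩ : ∃ C : ℝ, C = -x0^2*a1*a2 + x1^2*a0*a2 + x2^2*a0*a1 := ⟨_, rfl⟩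
  have hP : ∀ l : ℝ, -x0^2*(a1-l)*(a2-l) + x1^2*(a0-l)*(a2-l) + x2^2*(a0-l)*(a1-l)
      = l^2 + B*l + C := by
    intro l
    rw [hB, hC]
    linear_combination (l^2) * hx
  have hPa0 : a0^2 + B*a0 + C < 0 := by
    have h := hP a0
    nlinarith [mul_pos hx0' (mul_pos (sub_pos.mpr ha01) (sub_pos.mpr (ha01.trans ha12)))]
  have hPa1 : a1^2 + B*a1 + C < 0 := by
    have h := hP a1
    nlinarith [mul_pos hx1' (mul_pos (sub_pos.mpr ha01) (sub_pos.mpr ha12))]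
  have hPa2 : 0 < a2^2 + B*a2 + C := by
    have h := hP a2
    nlinarith [mul_pos hx2' (mul_pos (sub_pos.mpr (ha01.trans ha12)) (sub_pos.mpr ha12))]
  have hD : 0 < B^2 - 4*C := by nlinarith [sq_nonneg (2*a0 + B)]
  obtain ⟨s, hsdef⟩ : ∃ s : ℝ, s = Real.sqrt (B^2 - 4*C) := ⟨_, rfl⟩
  have hs2 : s^2 = B^2 - 4*C := by rw [hsdef]; exact Real.sq_sqrt hD.le
  have hs : 0 < s := by rw [hsdef]; exact Real.sqrt_pos.mpr hD
  obtain ⟨l1, hl1⟩ : ∃ l1 : ℝ, l1 = (-B - s)/2 := ⟨_, rfl⟩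
  obtain ⟨l2, hl2⟩ : ∃ l2 : ℝ, l2 = (-B + s)/2 := ⟨_, rfl⟩
  have hfact : ∀ l : ℝ, l^2 + B*l + C = (l - l1)*(l - l2) := by
    intro l
    rw [hl1, hl2]
    linear_combination ((1:ℝ)/4) * hs2
  have h12 : l1 < l2 := by rw [hl1, hl2]; linarith
  have h0a : (a0 - l1)*(a0 - l2) < 0 := by rw [← hfact]; exact hPa0
  have h1a : (a1 - l1)*(a1 - l2) < 0 := by rw [← hfact]; exact hPa1
  have h2a : 0 < (a2 - l1)*(a2 - l2) := by rw [← hfact]; exact hPa2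
  have hl1a0 : l1 < a0 := by
    by_contra hcon
    push_neg at hcon
    have : 0 ≤ (a0 - l1)*(a0 - l2) :=
      mul_nonneg_iff.mpr (Or.inr ⟨by linarith, by linarith⟩)
    linarith
  have ha1l2 : a1 < l2 := by
    by_contra hcon
    push_neg at hcon
    have : 0 ≤ (a1 - l1)*(a1 - l2) :=
      mul_nonneg (by linarith) (by linarith)
    linarith
  have hl2a2 : l2 < a2 := by
    by_contra hcon
    push_neg at hcon
    have : (a2 - l1)*(a2 - l2) ≤ 0 :=
      mul_nonpos_iff.mpr (Or.inl ⟨by linarith, by linarith⟩)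
    linarith
  refine ⟨l1, l2, h12, hl1a0, ha1l2, hl2a2, ?_⟩
  intro l hl0 hl1' hl2'
  have d0 : a0 - l ≠ 0 := sub_ne_zero.mpr (Ne.symm hl0)
  have d1 : a1 - l ≠ 0 := sub_ne_zero.mpr (Ne.symm hl1')
  have d2 : a2 - l ≠ 0 := sub_ne_zero.mpr (Ne.symm hl2')
  have hd : (a0 - l)*((a1 - l)*(a2 - l)) ≠ 0 := mul_ne_zero d0 (mul_ne_zero d1 d2)
  have e : l^2 + B*l + C =
      (-x0^2 / (a0 - l) + x1^2 / (a1 - l) + x2^2 / (a2 - l)) * ((a0 - l)*((a1 - l)*(a2 - l))) := by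
    rw [← hP l]
    field_simp
  constructor
  · intro h
    have hp : (l - l1)*(l - l2) = 0 := by rw [← hfact l, e, h, zero_mul]
    rcases mul_eq_zero.mp hp with h' | h'
    · exact Or.inl (by linarith [sub_eq_zero.mp h'])
    · exact Or.inr (by linarith [sub_eq_zero.mp h'])
  · intro h
    have h0 : (-x0^2 / (a0 - l) + x1^2 / (a1 - l) + x2^2 / (a2 - l)) * ((a0 - l)*((a1 - l)*(a2 - l))) = 0 := by
      rw [← e, hfact l]
      rcases h with h | h <;> rw [h] <;> ring
    exact (mul_eq_zero.mp h0).resolve_right hd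
end

section
/- Let 0 < a₀ < a₁ < a₂ and let x ∈ R³ satisfy -x₀² + x₁² + x₂² = 1 with x₀x₁x₂ ≠ 0. Then the discriminant of the monic quadratic numerator of -x₀²/(a₀-λ) + x₁²/(a₁-λ) + x₂²/(a₂-λ) equals (-(a₂-a₁)x₀² + (a₂-a₀)x₁²)² + (a₁-a₀)²x₂⁴ + 2(a₁-a₀)((a₂-a₁)x₀² + (a₂-a₀)x₁²)x₂², and this quantity is strictly positive. -/
/-- The discriminant of the monic quadratic numerator of the confocal family
equation, for `0 < a₀ < a₁ < a₂` and `x` on the hyperboloid of one sheet with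
`x₀x₁x₂ ≠ 0`, equals the stated expression and is strictly positive. -/
theorem stmt_2 (a0 a1 a2 x0 x1 x2 : ℝ)
    (ha0 : 0 < a0) (ha01 : a0 < a1) (ha12 : a1 < a2)
    (hx : -x0^2 + x1^2 + x2^2 = 1) (hxyz : x0 * x1 * x2 ≠ 0) :
    ∃ τ c : ℝ,
      (∀ l : ℝ, -x0^2 * (a1 - l) * (a2 - l) + x1^2 * (a0 - l) * (a2 - l)
          + x2^2 * (a0 - l) * (a1 - l) = l^2 - τ * l + c) ∧
      τ^2 - 4 * c =
        (-(a2 - a1) * x0^2 + (a2 - a0) * x1^2)^2 + (a1 - a0)^2 * x2^4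
          + 2 * (a1 - a0) * ((a2 - a1) * x0^2 + (a2 - a0) * x1^2) * x2^2 ∧
      0 < τ^2 - 4 * c := by
  have hx2 : x2 ≠ 0 := fun h => hxyz (by rw [h]; ring)
  refine ⟨-(x0^2*(a1+a2) - x1^2*(a0+a2) - x2^2*(a0+a1)),
    -x0^2*a1*a2 + x1^2*a0*a2 + x2^2*a0*a1, ?_, ?_, ?_⟩
  · intro l
    have h : -x0^2 + x1^2 + x2^2 = 1 := hx
    linear_combination (l^2) * h
  · linear_combination (4*(-x0^2*a1*a2 + x1^2*a0*a2 + x2^2*a0*a1)) * hx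
  · have h2 : (0:ℝ) < x2^2 := by positivity
    nlinarith [sq_nonneg (-(a2 - a1) * x0^2 + (a2 - a0) * x1^2), sq_nonneg x0, sq_nonneg x1,
      sq_nonneg x2, sq_nonneg (x2^2), mul_pos (mul_pos (sub_pos.2 ha01) (sub_pos.2 ha01)) (mul_pos h2 h2),
      mul_nonneg (mul_nonneg (le_of_lt (sub_pos.2 ha12)) (sq_nonneg x0)) h2.le,
      mul_nonneg (mul_nonneg (le_of_lt (sub_pos.2 (ha01.trans ha12))) (sq_nonneg x1)) h2.le,
      sub_pos.2 ha01]
end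

section
/- Let 0 < a₀ < a₁ < a₂ or a₁ < 0 < a₀ < a₂, and let x lie on the hyperboloid -x₀² + x₁² + x₂² = 1 with x₀ = 0 and x₁x₂ ≠ 0. Then λ = a₀ is a root of -x₀²/(a₀-λ) + x₁²/(a₁-λ) + x₂²/(a₂-λ) = 0 (interpreting the equation via the cleared-denominator quadratic), and the other root λ₂ satisfies a₁ ≤ λ₂ ≤ a₂. -/
/-- If `x₀ = 0` and `x₁x₂ ≠ 0` for `x` on the hyperboloid of one sheet, then
`λ = a₀` is a root of the (cleared-denominator) confocal equation and the other
root `λ₂` satisfies `a₁ ≤ λ₂ ≤ a₂`. -/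
theorem stmt_4 (a0 a1 a2 x0 x1 x2 : ℝ)
    (ha : (0 < a0 ∧ a0 < a1 ∧ a1 < a2) ∨ (a1 < 0 ∧ 0 < a0 ∧ a0 < a2))
    (hx : -x0^2 + x1^2 + x2^2 = 1) (hx0 : x0 = 0) (hx12 : x1 * x2 ≠ 0) :
    (-x0^2 * (a1 - a0) * (a2 - a0) + x1^2 * (a0 - a0) * (a2 - a0)
        + x2^2 * (a0 - a0) * (a1 - a0) = 0) ∧
    ∃ l2 : ℝ, a1 ≤ l2 ∧ l2 ≤ a2 ∧
      ∀ l : ℝ, -x0^2 * (a1 - l) * (a2 - l) + x1^2 * (a0 - l) * (a2 - l)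
          + x2^2 * (a0 - l) * (a1 - l) = (l - a0) * (l - l2) := by
  subst hx0
  have hs : x1^2 + x2^2 = 1 := by nlinarith [hx]
  have h12 : a1 ≤ a2 := by rcases ha with ⟨_, h, h'⟩ | ⟨h, h', h''⟩ <;> nlinarith
  have hx1 : 0 ≤ x1^2 := sq_nonneg x1
  have hx2 : 0 ≤ x2^2 := sq_nonneg x2
  refine ⟨by ring, x1^2 * a2 + x2^2 * a1, ?_, ?_, fun l => by linear_combination (l - a0) * l * hs⟩
  · have h : x1^2 * a2 + x2^2 * a1 - a1 = x1^2 * (a2 - a1) := by linear_combination a1 * hs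
    nlinarith [mul_nonneg hx1 (sub_nonneg.2 h12)]
  · have h : a2 - (x1^2 * a2 + x2^2 * a1) = x2^2 * (a2 - a1) := by linear_combination -a2 * hs
    nlinarith [mul_nonneg hx2 (sub_nonneg.2 h12)]
end

section
/- Let p and q be points on the hyperboloid H: -x₀² + x₁² + x₂² = 1 in Minkowski 3-space, lying in a common central plane (a plane through the origin). If ⟨p,q⟩ > 1, then the intersection of that plane with H restricted to the plane's induced metric contains a time-like curve through p and q; in particular, if p ≠ q and p ≠ -q and -1 < ⟨p,q⟩ < 1, then p and q lie on a periodic (closed) geodesic of H, namely the intersection of H with the plane spanned by p and q, which is an ellipse. -/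
/-!
If `⟨p,q⟩ = c > 1`, then `e = (q - c p) / √(c² - 1)` is a unit time-like vector orthogonal to
`p`, and `q = cosh a • p + sinh a • e` with `a = arcosh c`. The hyperbolic rotation
`t ↦ cosh (t a) • p + sinh (t a) • e` stays on the hyperboloid, passes through `p` and `q`, and has
velocity of Minkowski square `-a² < 0`.

If `|⟨p,q⟩| < 1`, the form restricted to `span {p, q}` is positive definite, since
`A² + 2cAB + B² ≥ (1 - |c|)(A² + B²)`; so the plane section of the hyperboloid is a closed set
whose coefficients are bounded, hence compact.
-/

/-- The Minkowski bilinear form on ℝ³. -/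
def mink (x y : Fin 3 → ℝ) : ℝ := -(x 0 * y 0) + x 1 * y 1 + x 2 * y 2

open Real

lemma mink_smul_add_smul_self (A B : ℝ) (x y : Fin 3 → ℝ) :
    mink (A • x + B • y) (A • x + B • y)
      = A ^ 2 * mink x x + 2 * A * B * mink x y + B ^ 2 * mink y y := by
  simp only [mink, Pi.add_apply, Pi.smul_apply, smul_eq_mul]; ring

lemma mink_smul_add_smul_right (A B : ℝ) (x y : Fin 3 → ℝ) :
    mink x (A • x + B • y) = A * mink x x + B * mink x y := by
  simp only [mink, Pi.add_apply, Pi.smul_apply, smul_eq_mul]; ring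

lemma continuous_mink_self : Continuous fun x : Fin 3 → ℝ => mink x x := by
  unfold mink; fun_prop

lemma hasDerivAt_cosh_smul_add_sinh_smul {E : Type*} [NormedAddCommGroup E] [NormedSpace ℝ E]
    (p e : E) (a t : ℝ) :
    HasDerivAt (fun s => cosh (s * a) • p + sinh (s * a) • e)
      ((a * sinh (t * a)) • p + (a * cosh (t * a)) • e) t := by
  have hlin : HasDerivAt (fun s => s * a) a t := hasDerivAt_mul_const a
  exact ((hlin.cosh.smul_const p).add (hlin.sinh.smul_const e)).congr_deriv
    (by rw [mul_comm a, mul_comm a])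

section HyperbolicRotation

variable {p e : Fin 3 → ℝ}

lemma mink_cosh_smul_add_sinh_smul (hp : mink p p = 1) (he : mink e e = -1)
    (hpe : mink p e = 0) (u : ℝ) :
    mink (cosh u • p + sinh u • e) (cosh u • p + sinh u • e) = 1 := by
  rw [mink_smul_add_smul_self, hp, he, hpe]
  linear_combination cosh_sq u

lemma mink_mul_sinh_smul_add_mul_cosh_smul (hp : mink p p = 1) (he : mink e e = -1)
    (hpe : mink p e = 0) (a u : ℝ) :
    mink ((a * sinh u) • p + (a * cosh u) • e) ((a * sinh u) • p + (a * cosh u) • e) = -a ^ 2 := by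
  rw [mink_smul_add_smul_self, hp, he, hpe]
  linear_combination -a ^ 2 * cosh_sq u

end HyperbolicRotation

lemma exists_timelike_unit_of_one_lt_mink {p q : Fin 3 → ℝ} (hp : mink p p = 1)
    (hq : mink q q = 1) (hpq : 1 < mink p q) :
    ∃ a > 0, ∃ e ∈ Submodule.span ℝ {p, q},
      mink p e = 0 ∧ mink e e = -1 ∧ cosh a • p + sinh a • e = q := by
  set c := mink p q
  set s := √(c ^ 2 - 1)
  have hs2 : s ^ 2 = c ^ 2 - 1 := sq_sqrt (by nlinarith)
  have hs : s ≠ 0 := (sqrt_pos.mpr (by nlinarith)).ne'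
  refine ⟨arcosh c, arcosh_pos hpq, (-(c / s)) • p + s⁻¹ • q,
    Submodule.mem_span_pair.mpr ⟨_, _, rfl⟩, ?_, ?_, ?_⟩
  · rw [mink_smul_add_smul_right, hp]
    field_simp; ring
  · rw [mink_smul_add_smul_self, hp, hq]
    field_simp
    linear_combination hs2
  · rw [cosh_arcosh hpq.le, sinh_arcosh hpq.le]
    ext i
    simp only [Pi.add_apply, Pi.smul_apply, smul_eq_mul]
    field_simp; ring

lemma one_sub_abs_mul_sq_add_sq_le (c A B : ℝ) :
    (1 - |c|) * (A ^ 2 + B ^ 2) ≤ A ^ 2 + 2 * c * A * B + B ^ 2 := by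
  have hAB : 2 * |A| * |B| ≤ A ^ 2 + B ^ 2 := by
    simpa only [sq_abs] using two_mul_le_add_sq |A| |B|
  have hcAB : -(2 * c * A * B) ≤ |c| * (2 * |A| * |B|) := by
    calc -(2 * c * A * B) ≤ |2 * c * A * B| := neg_le_abs _
      _ = |c| * (2 * |A| * |B|) := by simp only [abs_mul, abs_two]; ring
  nlinarith [abs_nonneg c]

lemma isCompact_hyperboloid_inter_span {p q : Fin 3 → ℝ} (hp : mink p p = 1)
    (hq : mink q q = 1) (hpq : |mink p q| < 1) :
    IsCompact {x : Fin 3 → ℝ | mink x x = 1 ∧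
      x ∈ (Submodule.span ℝ {p, q} : Submodule ℝ (Fin 3 → ℝ))} := by
  set R := √(1 / (1 - |mink p q|))
  have hclosed : IsClosed {x : Fin 3 → ℝ | mink x x = 1 ∧
      x ∈ (Submodule.span ℝ {p, q} : Submodule ℝ (Fin 3 → ℝ))} :=
    (isClosed_eq continuous_mink_self continuous_const).inter
      (Submodule.closed_of_finiteDimensional _)
  have hsub : {x : Fin 3 → ℝ | mink x x = 1 ∧
      x ∈ (Submodule.span ℝ {p, q} : Submodule ℝ (Fin 3 → ℝ))} ⊆
      (fun AB : ℝ × ℝ => AB.1 • p + AB.2 • q) '' Metric.closedBall 0 R := by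
    rintro x ⟨hx, hx_mem⟩
    obtain ⟨A, B, rfl⟩ := Submodule.mem_span_pair.mp hx_mem
    rw [mink_smul_add_smul_self, hp, hq] at hx
    have hbound : A ^ 2 + B ^ 2 ≤ 1 / (1 - |mink p q|) := by
      rw [le_div_iff₀ (by linarith)]
      nlinarith [one_sub_abs_mul_sq_add_sq_le (mink p q) A B]
    refine ⟨(A, B), ?_, rfl⟩
    rw [mem_closedBall_zero_iff, Prod.norm_def, max_le_iff, norm_eq_abs, norm_eq_abs]
    exact ⟨abs_le_sqrt (by nlinarith), abs_le_sqrt (by nlinarith)⟩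
  exact ((isCompact_closedBall 0 R).image (by fun_prop)).of_isClosed_subset hclosed hsub

/-- Points `p, q` on the hyperboloid of one sheet lying in a common central
plane: if `⟨p,q⟩ > 1` they lie on a time-like curve in that plane; and if
`p ≠ q`, `p ≠ -q` and `-1 < ⟨p,q⟩ < 1` they lie on a closed (compact)
geodesic, the intersection of the hyperboloid with the plane spanned by
`p` and `q`. -/
theorem stmt_5 (p q : Fin 3 → ℝ) (hp : mink p p = 1) (hq : mink q q = 1) :
    (mink p q > 1 →
      ∃ γ : ℝ → Fin 3 → ℝ, γ 0 = p ∧ γ 1 = q ∧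
        (∀ t : ℝ, ∀ i : Fin 3, DifferentiableAt ℝ (fun s => γ s i) t) ∧
        (∀ t : ℝ, mink (γ t) (γ t) = 1) ∧
        (∀ t : ℝ, γ t ∈ (Submodule.span ℝ {p, q} : Submodule ℝ (Fin 3 → ℝ))) ∧
        (∀ t : ℝ, mink (fun i => deriv (fun s => γ s i) t)
            (fun i => deriv (fun s => γ s i) t) < 0)) ∧
    (p ≠ q → p ≠ -q → -1 < mink p q → mink p q < 1 →
      p ∈ {x : Fin 3 → ℝ | mink x x = 1 ∧
              x ∈ (Submodule.span ℝ {p, q} : Submodule ℝ (Fin 3 → ℝ))} ∧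
      q ∈ {x : Fin 3 → ℝ | mink x x = 1 ∧
              x ∈ (Submodule.span ℝ {p, q} : Submodule ℝ (Fin 3 → ℝ))} ∧
      IsCompact {x : Fin 3 → ℝ | mink x x = 1 ∧
              x ∈ (Submodule.span ℝ {p, q} : Submodule ℝ (Fin 3 → ℝ))}) := by
  have hp_mem : p ∈ Submodule.span ℝ {p, q} := Submodule.subset_span (by simp)
  have hq_mem : q ∈ Submodule.span ℝ {p, q} := Submodule.subset_span (by simp)
  refine ⟨fun hpq => ?_, fun _ _ hlo hhi =>
    ⟨⟨hp, hp_mem⟩, ⟨hq, hq_mem⟩, isCompact_hyperboloid_inter_span hp hq (abs_lt.mpr ⟨hlo, hhi⟩)⟩⟩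
  obtain ⟨a, ha, e, he_mem, hpe, he, hq_eq⟩ := exists_timelike_unit_of_one_lt_mink hp hq hpq
  have hγ' (t : ℝ) := hasDerivAt_cosh_smul_add_sinh_smul p e a t
  refine ⟨fun t => cosh (t * a) • p + sinh (t * a) • e, by simp, by simpa using hq_eq,
    fun t i => (hasDerivAt_pi.mp (hγ' t) i).differentiableAt,
    fun t => mink_cosh_smul_add_sinh_smul hp he hpe _,
    fun t => add_mem (Submodule.smul_mem _ _ hp_mem) (Submodule.smul_mem _ _ he_mem),
    fun t => ?_⟩
  have hderiv : (fun i => deriv (fun s => (cosh (s * a) • p + sinh (s * a) • e) i) t)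
      = (a * sinh (t * a)) • p + (a * cosh (t * a)) • e :=
    funext fun i => (hasDerivAt_pi.mp (hγ' t) i).deriv
  rw [hderiv, mink_mul_sinh_smul_add_mul_cosh_smul hp he hpe]
  exact neg_neg_of_pos (pow_pos ha 2)
end

section
/- Let p, q be two points on the hyperboloid H: ⟨x,x⟩ = 1 in Minkowski 3-space with ⟨p,q⟩ ≤ -1 and q ≠ -p. Then no plane through the origin intersects H in a connected curve containing both p and q; equivalently, p and q cannot be joined by a geodesic of H. -/
lemma mink_comb (a b : ℝ) (u v y : Fin 3 → ℝ) :
    mink (a • u + b • v) y = a * mink u y + b * mink v y := by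
  simp [mink]; ring

lemma mink_symm (u v : Fin 3 → ℝ) : mink u v = mink v u := by
  simp [mink]; ring

lemma mink_cont (p : Fin 3 → ℝ) : Continuous fun x => mink p x := by
  unfold mink; fun_prop

/-- If `p, q` lie on the hyperboloid of one sheet with `⟨p,q⟩ ≤ -1` and
`q ≠ -p`, then no central plane meets the hyperboloid in a connected curve
containing both `p` and `q`: they cannot be joined by a geodesic. -/
theorem stmt_6 (p q : Fin 3 → ℝ) (hp : mink p p = 1) (hq : mink q q = 1)
    (hpq : mink p q ≤ -1) (hne : q ≠ -p) :
    ∀ W : Submodule ℝ (Fin 3 → ℝ), Module.finrank ℝ W = 2 →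
      ∀ C : Set (Fin 3 → ℝ), IsConnected C →
        C ⊆ {x : Fin 3 → ℝ | mink x x = 1} ∩ (W : Set (Fin 3 → ℝ)) →
        ¬(p ∈ C ∧ q ∈ C) := by
  intro W hW C hC hsub ⟨hpC, hqC⟩
  -- intermediate value: find x ∈ C with mink p x = 0
  have hiv := hC.isPreconnected.intermediate_value hqC hpC
      ((mink_cont p).continuousOn)
  have h0mem : (0 : ℝ) ∈ (fun x => mink p x) '' C := by
    apply hiv
    constructor
    · linarith
    · simp [hp]
  obtain ⟨x, hxC, hx0'⟩ := h0mem
  have hx0 : mink p x = 0 := hx0'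
  have hxH : mink x x = 1 := (hsub hxC).1
  have hxW : x ∈ W := (hsub hxC).2
  have hpW : p ∈ W := (hsub hpC).2
  have hqW : q ∈ W := (hsub hqC).2
  -- p and x are linearly independent
  have hind : LinearIndependent ℝ ![p, x] := by
    rw [LinearIndependent.pair_iff]
    intro s t hst
    have h1 : mink (s • p + t • x) p = 0 := by rw [hst]; simp [mink]
    have h2 : mink (s • p + t • x) x = 0 := by rw [hst]; simp [mink]
    rw [mink_comb] at h1 h2
    rw [hp, mink_symm x p, hx0] at h1
    rw [hx0, hxH] at h2
    constructor <;> linarith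
  -- span {p, x} = W
  have hle : Submodule.span ℝ {p, x} ≤ W := by
    rw [Submodule.span_le]
    intro y hy
    rcases hy with h | h
    · simpa [h] using hpW
    · simp at h; simpa [h] using hxW
  have hrange : Set.range ![p, x] = {p, x} := by
    ext y; simp [Fin.exists_fin_two]; tauto
  have hfr : Module.finrank ℝ (Submodule.span ℝ {p, x}) = 2 := by
    rw [← hrange]
    simpa using finrank_span_eq_card hind
  have hspan : Submodule.span ℝ {p, x} = W :=
    Submodule.eq_of_le_of_finrank_eq hle (by rw [hfr, hW])
  have hqspan : q ∈ Submodule.span ℝ {p, x} := hspan ▸ hqW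
  obtain ⟨a, b, hab⟩ := Submodule.mem_span_pair.mp hqspan
  -- compute coefficients
  have h1 : mink q p = a := by
    rw [← hab, mink_comb, hp, mink_symm x p, hx0]; ring
  have h2 : mink q x = b := by
    rw [← hab, mink_comb, hx0, hxH]; ring
  have h3 : mink q q = a * a + b * b := by
    nth_rewrite 1 [← hab]
    rw [mink_comb, mink_symm p q, mink_symm x q, h1, h2]
  rw [hq] at h3
  rw [mink_symm q p] at h1
  have hb : b = 0 := by nlinarith
  have ha : a = -1 := by nlinarith
  apply hne
  rw [← hab, ha, hb]
  ext i; simp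
end

section
/- Let A = diag(a₀,a₁,a₂) act on Minkowski 3-space with form ⟨x,y⟩ = -x₀y₀ + x₁y₁ + x₂y₂, and let x, y ∈ R³. For μ not equal to any a_i, define φ_μ(x,y) = ⟨(A-μI)⁻¹x, y⟩² - ⟨(A-μI)⁻¹x, x⟩⟨(A-μI)⁻¹y, y⟩. Then φ_μ(x,y) = Σ_{i=0}^{2} F_i/(a_i - μ), where F_j = Σ_{i≠j} J_i J_j (x_i y_j - x_j y_i)²/(a_j - a_i) with J₀ = -1, J₁ = J₂ = 1. -/
lemma key_frac (a b m : ℝ) (ha : a - m ≠ 0) (hb : b - m ≠ 0) (hab : a - b ≠ 0) :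
    (1 / (a - m)) * (1 / (b - m)) = (1 / (b - m) - 1 / (a - m)) / (a - b) := by
  field_simp
  ring

/-- Partial-fraction identity: `φ_μ(x,y) = Σ Fᵢ/(aᵢ - μ)` for the Minkowski
form of signature `(-,+,+)` and `A = diag(a₀,a₁,a₂)` with distinct entries,
`μ` avoiding the `aᵢ`. -/
theorem stmt_9 (a0 a1 a2 x0 x1 x2 y0 y1 y2 μ : ℝ)
    (h01 : a0 ≠ a1) (h02 : a0 ≠ a2) (h12 : a1 ≠ a2)
    (hμ0 : μ ≠ a0) (hμ1 : μ ≠ a1) (hμ2 : μ ≠ a2) :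
    let ipxy := -(x0 * y0) / (a0 - μ) + x1 * y1 / (a1 - μ) + x2 * y2 / (a2 - μ)
    let ipxx := -(x0 * x0) / (a0 - μ) + x1 * x1 / (a1 - μ) + x2 * x2 / (a2 - μ)
    let ipyy := -(y0 * y0) / (a0 - μ) + y1 * y1 / (a1 - μ) + y2 * y2 / (a2 - μ)
    let F0 := (1 : ℝ) * (-1) * (x1 * y0 - x0 * y1)^2 / (a0 - a1)
      + (1 : ℝ) * (-1) * (x2 * y0 - x0 * y2)^2 / (a0 - a2)
    let F1 := (-1 : ℝ) * 1 * (x0 * y1 - x1 * y0)^2 / (a1 - a0)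
      + (1 : ℝ) * 1 * (x2 * y1 - x1 * y2)^2 / (a1 - a2)
    let F2 := (-1 : ℝ) * 1 * (x0 * y2 - x2 * y0)^2 / (a2 - a0)
      + (1 : ℝ) * 1 * (x1 * y2 - x2 * y1)^2 / (a2 - a1)
    ipxy^2 - ipxx * ipyy = F0 / (a0 - μ) + F1 / (a1 - μ) + F2 / (a2 - μ) := by
  have h0 : a0 - μ ≠ 0 := sub_ne_zero.mpr (Ne.symm hμ0)
  have h1 : a1 - μ ≠ 0 := sub_ne_zero.mpr (Ne.symm hμ1)
  have h2 : a2 - μ ≠ 0 := sub_ne_zero.mpr (Ne.symm hμ2)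
  have d01 : a0 - a1 ≠ 0 := sub_ne_zero.mpr h01
  have d02 : a0 - a2 ≠ 0 := sub_ne_zero.mpr h02
  have d12 : a1 - a2 ≠ 0 := sub_ne_zero.mpr h12
  have e01 := key_frac a0 a1 μ h0 h1 d01
  have e02 := key_frac a0 a2 μ h0 h2 d02
  have e12 := key_frac a1 a2 μ h1 h2 d12
  simp only
  rw [show a1 - a0 = -(a0 - a1) from by ring, show a2 - a0 = -(a0 - a2) from by ring,
    show a2 - a1 = -(a1 - a2) from by ring]
  simp only [div_neg]
  linear_combination (x0 * y1 - x1 * y0)^2 * e01 + (x0 * y2 - x2 * y0)^2 * e02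
    - (x1 * y2 - x2 * y1)^2 * e12
end

section
/- Let x = (x₀,x₁,x₂), y = (y₀,y₁,y₂) lie on the hyperboloid -x₀²+x₁²+x₂² = 1 in Minkowski 3-space, with A = diag(a₀,a₁,a₂) having distinct entries. Suppose the denominator -(x₁y₂-x₂y₁)² + (x₀y₂-x₂y₀)² + (x₀y₁-x₁y₀)² is nonzero. Then the equation φ_μ(x,y) = 0 has the unique root μ = ν where ν = (-a₀(x₁y₂-x₂y₁)² + a₁(x₀y₂-x₂y₀)² + a₂(x₀y₁-x₁y₀)²) / (-(x₁y₂-x₂y₁)² + (x₀y₂-x₂y₀)² + (x₀y₁-x₁y₀)²). -/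
/-- For `x, y` on the hyperboloid of one sheet, `A = diag(a₀,a₁,a₂)` with
distinct entries and nonvanishing denominator, the equation `φ_μ(x,y) = 0`
has the unique root `μ = ν` with `ν` given explicitly. -/
theorem stmt_10 (a0 a1 a2 x0 x1 x2 y0 y1 y2 : ℝ)
    (hx : -x0^2 + x1^2 + x2^2 = 1) (hy : -y0^2 + y1^2 + y2^2 = 1)
    (h01 : a0 ≠ a1) (h02 : a0 ≠ a2) (h12 : a1 ≠ a2)
    (hden : -(x1 * y2 - x2 * y1)^2 + (x0 * y2 - x2 * y0)^2
        + (x0 * y1 - x1 * y0)^2 ≠ 0) :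
    ∀ μ : ℝ, μ ≠ a0 → μ ≠ a1 → μ ≠ a2 →
      (((-(x0 * y0) / (a0 - μ) + x1 * y1 / (a1 - μ) + x2 * y2 / (a2 - μ))^2
        - (-(x0 * x0) / (a0 - μ) + x1 * x1 / (a1 - μ) + x2 * x2 / (a2 - μ))
          * (-(y0 * y0) / (a0 - μ) + y1 * y1 / (a1 - μ) + y2 * y2 / (a2 - μ))) = 0
       ↔ μ = (-a0 * (x1 * y2 - x2 * y1)^2 + a1 * (x0 * y2 - x2 * y0)^2
              + a2 * (x0 * y1 - x1 * y0)^2)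
            / (-(x1 * y2 - x2 * y1)^2 + (x0 * y2 - x2 * y0)^2
              + (x0 * y1 - x1 * y0)^2)) := by
  intro μ h0 h1 h2
  have u0 : a0 - μ ≠ 0 := sub_ne_zero.mpr (fun h => h0 h.symm)
  have u1 : a1 - μ ≠ 0 := sub_ne_zero.mpr (fun h => h1 h.symm)
  have u2 : a2 - μ ≠ 0 := sub_ne_zero.mpr (fun h => h2 h.symm)
  set N := -a0 * (x1 * y2 - x2 * y1)^2 + a1 * (x0 * y2 - x2 * y0)^2
      + a2 * (x0 * y1 - x1 * y0)^2 with hN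
  set D := -(x1 * y2 - x2 * y1)^2 + (x0 * y2 - x2 * y0)^2
      + (x0 * y1 - x1 * y0)^2 with hD
  have key : ((-(x0 * y0) / (a0 - μ) + x1 * y1 / (a1 - μ) + x2 * y2 / (a2 - μ))^2
        - (-(x0 * x0) / (a0 - μ) + x1 * x1 / (a1 - μ) + x2 * x2 / (a2 - μ))
          * (-(y0 * y0) / (a0 - μ) + y1 * y1 / (a1 - μ) + y2 * y2 / (a2 - μ)))
        * ((a0 - μ) * (a1 - μ) * (a2 - μ)) = N - μ * D := by
    field_simp
    ring
  constructor
  · intro hφ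
    have : N - μ * D = 0 := by rw [← key, hφ]; ring
    rw [eq_div_iff hden]
    linarith [this]
  · intro hμ
    have hND : N - μ * D = 0 := by
      rw [eq_div_iff hden] at hμ
      linarith [hμ]
    have := key
    rw [hND] at this
    have hprod : (a0 - μ) * (a1 - μ) * (a2 - μ) ≠ 0 :=
      mul_ne_zero (mul_ne_zero u0 u1) u2
    exact (mul_eq_zero.mp this).resolve_right hprod
end

section
/- Let A = diag(a₀,a₁,a₂) act on Minkowski 3-space and let L(λ) = A + λ(x ⊗ y* - y ⊗ x*) where (x ⊗ y*)(v) = ⟨y,v⟩x is formed with the Minkowski form ⟨·,·⟩. Then for all μ and λ: det(L(λ) - μI) = det(A - μI)·(1 - λ²φ_μ(x,y)), where φ_μ(x,y) = ⟨(A-μI)⁻¹x,y⟩² - ⟨(A-μI)⁻¹x,x⟩⟨(A-μI)⁻¹y,y⟩ (for μ avoiding the a_i). -/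
private lemma det3_aux (d0 d1 d2 lam x0 x1 x2 y0 y1 y2 : ℝ) :
    (!![d0, lam*(x0*y1 - y0*x1), lam*(x0*y2 - y0*x2);
       lam*(x1*(-y0) - y1*(-x0)), d1, lam*(x1*y2 - y1*x2);
       lam*(x2*(-y0) - y2*(-x0)), lam*(x2*y1 - y2*x1), d2] : Matrix (Fin 3) (Fin 3) ℝ).det
    = d0*d1*d2 - lam^2*(d2*(x0*y1-x1*y0)^2 + d1*(x0*y2-x2*y0)^2 - d0*(x1*y2-x2*y1)^2) := by
  simp [Matrix.det_fin_three]
  ring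

private lemma phi3_aux (d0 d1 d2 lam x0 x1 x2 y0 y1 y2 : ℝ)
    (h0 : d0 ≠ 0) (h1 : d1 ≠ 0) (h2 : d2 ≠ 0) :
    d0*d1*d2 * (1 - lam^2*((-(x0*y0)/d0 + x1*y1/d1 + x2*y2/d2)^2
      - (-(x0*x0)/d0 + x1*x1/d1 + x2*x2/d2) * (-(y0*y0)/d0 + y1*y1/d1 + y2*y2/d2)))
    = d0*d1*d2 - lam^2*(d2*(x0*y1-x1*y0)^2 + d1*(x0*y2-x2*y0)^2 - d0*(x1*y2-x2*y1)^2) := by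
  field_simp
  ring

/-- Characteristic polynomial of the Lax matrix `L(λ) = A + λ(x∧y)` of the
confocal billiard on the hyperboloid of one sheet:
`det(L(λ) - μI) = det(A - μI)(1 - λ²φ_μ(x,y))` for `μ` avoiding the `aᵢ`. -/
theorem stmt_11 (a0 a1 a2 lam μ : ℝ) (x y : Fin 3 → ℝ)
    (hμ0 : μ ≠ a0) (hμ1 : μ ≠ a1) (hμ2 : μ ≠ a2) :
    let J : Fin 3 → ℝ := ![-1, 1, 1]
    let A : Matrix (Fin 3) (Fin 3) ℝ := Matrix.diagonal ![a0, a1, a2]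
    let L : Matrix (Fin 3) (Fin 3) ℝ :=
      A + lam • Matrix.of (fun i j => x i * (J j * y j) - y i * (J j * x j))
    let φ := (-(x 0 * y 0) / (a0 - μ) + x 1 * y 1 / (a1 - μ) + x 2 * y 2 / (a2 - μ))^2
      - (-(x 0 * x 0) / (a0 - μ) + x 1 * x 1 / (a1 - μ) + x 2 * x 2 / (a2 - μ))
        * (-(y 0 * y 0) / (a0 - μ) + y 1 * y 1 / (a1 - μ) + y 2 * y 2 / (a2 - μ))
    (L - μ • (1 : Matrix (Fin 3) (Fin 3) ℝ)).det =
      (A - μ • (1 : Matrix (Fin 3) (Fin 3) ℝ)).det * (1 - lam^2 * φ) := by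
  intro J A L φ
  have h0 : a0 - μ ≠ 0 := sub_ne_zero.2 (fun h => hμ0 h.symm)
  have h1 : a1 - μ ≠ 0 := sub_ne_zero.2 (fun h => hμ1 h.symm)
  have h2 : a2 - μ ≠ 0 := sub_ne_zero.2 (fun h => hμ2 h.symm)
  have hM : L - μ • (1 : Matrix (Fin 3) (Fin 3) ℝ) =
      !![a0 - μ, lam*(x 0*y 1 - y 0*x 1), lam*(x 0*y 2 - y 0*x 2);
         lam*(x 1*(-(y 0)) - y 1*(-(x 0))), a1 - μ, lam*(x 1*y 2 - y 1*x 2);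
         lam*(x 2*(-(y 0)) - y 2*(-(x 0))), lam*(x 2*y 1 - y 2*x 1), a2 - μ] := by
    ext i j
    fin_cases i <;> fin_cases j <;>
      simp [L, A, J, Matrix.sub_apply, Matrix.add_apply, Matrix.smul_apply,
        Matrix.one_apply, Matrix.diagonal_apply] <;> first | ring1 | exact Or.inr (by ring)
  have hA : (A - μ • (1 : Matrix (Fin 3) (Fin 3) ℝ)).det = (a0 - μ)*(a1 - μ)*(a2 - μ) := by
    simp [A, Matrix.det_fin_three, Matrix.sub_apply, Matrix.smul_apply, Matrix.one_apply,
      Matrix.diagonal_apply]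
  rw [hM, det3_aux, hA]
  exact (phi3_aux (a0 - μ) (a1 - μ) (a2 - μ) lam (x 0) (x 1) (x 2) (y 0) (y 1) (y 2)
    h0 h1 h2).symm
end

section
/- Let a, b, c be distinct nonzero reals and let B₃ denote the coefficient of X³ in the Taylor expansion at X = 0 of √((X-a)(X-b)(X-c)(X-ν)). Then B₃ = 0 if and only if (ν(-ab+ac+bc) - abc)(ν(ab+ac-bc) - abc)(ν(ab-ac+bc) - abc) = 0 (up to a nonzero constant factor); in particular, when the respective denominators are nonzero, the solutions are ν = abc/(-ab+bc+ac), ν = abc/(ab-bc+ac), and ν = abc/(ab+bc-ac). -/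
/-!
Squaring the expansion `B₀ + B₁X + B₂X² + B₃X³ + ⋯` and comparing coefficients solves for `B₃`
recursively; clearing the denominators `2B₀` gives `16 B₀⁵ B₃` as a polynomial in the first four
coefficients of the quartic. For the quartic `(X-a)(X-b)(X-c)(X-ν)` that polynomial factors into
three factors linear in `ν`, and `B₀ ≠ 0` makes `B₃ = 0` equivalent to its vanishing.
-/

theorem sqrt_coeff_three_mul_pow_five {R : Type*} [CommRing R] {c₀ c₁ c₂ c₃ B₀ B₁ B₂ B₃ : R}
    (h₀ : B₀ ^ 2 = c₀) (h₁ : 2 * B₀ * B₁ = c₁) (h₂ : 2 * B₀ * B₂ + B₁ ^ 2 = c₂)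
    (h₃ : 2 * B₀ * B₃ + 2 * B₁ * B₂ = c₃) :
    16 * B₀ ^ 5 * B₃ = 8 * c₀ ^ 2 * c₃ - 4 * c₀ * c₁ * c₂ + c₁ ^ 3 := by
  linear_combination (8 * c₃ * (B₀ ^ 2 + c₀) - 4 * c₁ * c₂) * h₀
    + ((2 * B₀ * B₁) ^ 2 + 2 * B₀ * B₁ * c₁ + c₁ ^ 2 - 4 * c₂ * B₀ ^ 2) * h₁
    - 8 * B₀ ^ 3 * B₁ * h₂ + 8 * B₀ ^ 4 * h₃

theorem cayley_four_periodic_factor {R : Type*} [CommRing R] (a b c ν : R) :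
    8 * (a * b * c * ν) ^ 2 * (-(a + b + c + ν))
        - 4 * (a * b * c * ν) * (-(a * b * c + a * b * ν + a * c * ν + b * c * ν))
          * (a * b + a * c + b * c + (a + b + c) * ν)
        + (-(a * b * c + a * b * ν + a * c * ν + b * c * ν)) ^ 3 =
      (ν * (-(a * b) + a * c + b * c) - a * b * c)
        * (ν * (a * b + a * c - b * c) - a * b * c)
        * (ν * (a * b - a * c + b * c) - a * b * c) := by
  ring

theorem stmt_16_general (a b c ν B0 B1 B2 B3 : ℝ)
    (hB0 : B0 ≠ 0)
    (h0 : B0^2 = a * b * c * ν)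
    (h1 : 2 * B0 * B1 = -(a * b * c + a * b * ν + a * c * ν + b * c * ν))
    (h2 : 2 * B0 * B2 + B1^2 = a * b + a * c + b * c + (a + b + c) * ν)
    (h3 : 2 * B0 * B3 + 2 * B1 * B2 = -(a + b + c + ν)) :
    (B3 = 0 ↔
      (ν * (-(a * b) + a * c + b * c) - a * b * c)
        * (ν * (a * b + a * c - b * c) - a * b * c)
        * (ν * (a * b - a * c + b * c) - a * b * c) = 0) ∧
    (-(a * b) + b * c + a * c ≠ 0 → a * b - b * c + a * c ≠ 0 →
      a * b + b * c - a * c ≠ 0 →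
      (B3 = 0 ↔ ν = a * b * c / (-(a * b) + b * c + a * c)
        ∨ ν = a * b * c / (a * b - b * c + a * c)
        ∨ ν = a * b * c / (a * b + b * c - a * c))) := by
  have hcayley : B3 = 0 ↔
      (ν * (-(a * b) + a * c + b * c) - a * b * c)
        * (ν * (a * b + a * c - b * c) - a * b * c)
        * (ν * (a * b - a * c + b * c) - a * b * c) = 0 := by
    rw [← cayley_four_periodic_factor, ← sqrt_coeff_three_mul_pow_five h0 h1 h2 h3,
      mul_eq_zero_iff_left (by positivity)]
  refine ⟨hcayley, fun d₁ d₂ d₃ => ?_⟩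
  rw [hcayley, show -(a * b) + a * c + b * c = -(a * b) + b * c + a * c by ring,
    show a * b + a * c - b * c = a * b - b * c + a * c by ring,
    show a * b - a * c + b * c = a * b + b * c - a * c by ring,
    mul_eq_zero, mul_eq_zero, sub_eq_zero, sub_eq_zero, sub_eq_zero,
    eq_div_iff d₁, eq_div_iff d₂, eq_div_iff d₃, or_assoc]

/-- Cayley condition for 4-periodic trajectories: with `B₀,…,B₃` the Taylor
coefficients at `X = 0` of `√((X-a)(X-b)(X-c)(X-ν))` (characterized by the
coefficient equations below, `B₀ ≠ 0`), `B₃ = 0` holds iff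
`(ν(-ab+ac+bc)-abc)(ν(ab+ac-bc)-abc)(ν(ab-ac+bc)-abc) = 0`; when the
respective denominators are nonzero the solutions are
`ν = abc/(-ab+bc+ac)`, `ν = abc/(ab-bc+ac)`, `ν = abc/(ab+bc-ac)`. -/
theorem stmt_16 (a b c ν B0 B1 B2 B3 : ℝ)
    (ha : a ≠ 0) (hb : b ≠ 0) (hc : c ≠ 0)
    (hab : a ≠ b) (hac : a ≠ c) (hbc : b ≠ c)
    (hB0 : B0 ≠ 0)
    (h0 : B0^2 = a * b * c * ν)
    (h1 : 2 * B0 * B1 = -(a * b * c + a * b * ν + a * c * ν + b * c * ν))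
    (h2 : 2 * B0 * B2 + B1^2 = a * b + a * c + b * c + (a + b + c) * ν)
    (h3 : 2 * B0 * B3 + 2 * B1 * B2 = -(a + b + c + ν)) :
    (B3 = 0 ↔
      (ν * (-(a * b) + a * c + b * c) - a * b * c)
        * (ν * (a * b + a * c - b * c) - a * b * c)
        * (ν * (a * b - a * c + b * c) - a * b * c) = 0) ∧
    (-(a * b) + b * c + a * c ≠ 0 → a * b - b * c + a * c ≠ 0 →
      a * b + b * c - a * c ≠ 0 →
      (B3 = 0 ↔ ν = a * b * c / (-(a * b) + b * c + a * c)
        ∨ ν = a * b * c / (a * b - b * c + a * c)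
        ∨ ν = a * b * c / (a * b + b * c - a * c))) :=
  stmt_16_general a b c ν B0 B1 B2 B3 hB0 h0 h1 h2 h3
end

section
/- Let A = diag(a₀,a₁,a₂) with distinct entries and fix λ with λ ∉ {a₀,a₁,a₂}. Let C_λ be the curve of intersection of the cone -x₀²/(a₀-λ) + x₁²/(a₁-λ) + x₂²/(a₂-λ) = 0 with the hyperboloid -x₀²+x₁²+x₂² = 1. Then C_λ is contained in a compact subset of R³ if 0<a₀<a₁<a₂ and λ < a₀, or if a₁<0<a₀<a₂ and a₁ < λ < a₀; and C_λ is unbounded if 0<a₀<a₁<a₂ and a₁ < λ < a₂, or if a₁<0<a₀<a₂ and (λ < a₁ or λ > a₂). -/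
/-- Construction of far-away points on the curve when `(β-α)/β < 0 < (γ-α)/γ`. -/
lemma construct_point (α β γ t : ℝ) (hα : α ≠ 0) (hβ : β ≠ 0) (hγ : γ ≠ 0)
    (hc1 : (β - α) / β < 0) (hc2 : 0 < (γ - α) / γ) (ht : 1 ≤ t) :
    ∃ u v w : ℝ, -w^2 + u^2 + v^2 = 1 ∧ -w^2/α + u^2/β + v^2/γ = 0 ∧ t ≤ |u| := by
  have ht2 : (1:ℝ) ≤ t^2 := by nlinarith
  have hnum : 0 ≤ 1 - (β - α) / β * t^2 := by nlinarith
  have hvv : 0 ≤ (1 - (β - α) / β * t^2) / ((γ - α) / γ) := div_nonneg hnum hc2.le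
  set V : ℝ := (1 - (β - α) / β * t^2) / ((γ - α) / γ) with hVdef
  have hv2 : (Real.sqrt V)^2 = V := Real.sq_sqrt hvv
  have hw2 : (Real.sqrt (t^2 + V - 1))^2 = t^2 + V - 1 := Real.sq_sqrt (by nlinarith)
  have hV : (γ - α)/γ * V = 1 - (β - α)/β * t^2 := by
    rw [hVdef, mul_div_cancel₀ _ (ne_of_gt hc2)]
  refine ⟨t, Real.sqrt V, Real.sqrt (t^2 + V - 1), ?_, ?_, ?_⟩
  · rw [hv2, hw2]; ring
  · rw [hv2, hw2]
    field_simp at hV ⊢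
    linear_combination -hV
  · rw [abs_of_pos (by linarith)]

/-- Classification of the intersection curves `C_λ` of the confocal family with
the hyperboloid of one sheet: `C_λ` is bounded (elliptic-type) for `λ < a₀` in
the collared case `0 < a₀ < a₁ < a₂`, or `a₁ < λ < a₀` in the transverse case
`a₁ < 0 < a₀ < a₂`; and unbounded (hyperbolic-type) for `a₁ < λ < a₂` in the
collared case, or `λ < a₁` or `λ > a₂` in the transverse case. -/
theorem stmt_19 (a0 a1 a2 lam : ℝ)
    (h01 : a0 ≠ a1) (h02 : a0 ≠ a2) (h12 : a1 ≠ a2)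
    (hl0 : lam ≠ a0) (hl1 : lam ≠ a1) (hl2 : lam ≠ a2) :
    let C : Set (Fin 3 → ℝ) := {x | -(x 0)^2 + (x 1)^2 + (x 2)^2 = 1 ∧
      -(x 0)^2 / (a0 - lam) + (x 1)^2 / (a1 - lam) + (x 2)^2 / (a2 - lam) = 0}
    (((0 < a0 ∧ a0 < a1 ∧ a1 < a2 ∧ lam < a0) ∨
      (a1 < 0 ∧ 0 < a0 ∧ a0 < a2 ∧ a1 < lam ∧ lam < a0)) →
        Bornology.IsBounded C) ∧
    (((0 < a0 ∧ a0 < a1 ∧ a1 < a2 ∧ a1 < lam ∧ lam < a2) ∨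
      (a1 < 0 ∧ 0 < a0 ∧ a0 < a2 ∧ (lam < a1 ∨ a2 < lam))) →
        ¬ Bornology.IsBounded C) := by
  intro C
  have h0 : a0 - lam ≠ 0 := sub_ne_zero.mpr (Ne.symm hl0)
  have h1 : a1 - lam ≠ 0 := sub_ne_zero.mpr (Ne.symm hl1)
  have h2 : a2 - lam ≠ 0 := sub_ne_zero.mpr (Ne.symm hl2)
  constructor
  · -- bounded part
    intro hcase
    have hc1 : 0 < (a1 - a0) / (a1 - lam) := by
      rcases hcase with ⟨_, h, _, h'⟩ | ⟨hA, hB, hC, hD, hE⟩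
      · exact div_pos (by linarith) (by linarith)
      · exact div_pos_of_neg_of_neg (by linarith) (by linarith)
    have hc2 : 0 < (a2 - a0) / (a2 - lam) := by
      rcases hcase with ⟨_, h, h', h''⟩ | ⟨hA, hB, hC, hD, hE⟩
      · exact div_pos (by linarith) (by linarith)
      · exact div_pos (by linarith) (by linarith)
    set c1 := (a1 - a0) / (a1 - lam) with hc1def
    set c2 := (a2 - a0) / (a2 - lam) with hc2def
    set B : ℝ := 1/c1 + 1/c2 + 1 with hBdef
    have hB : 0 < B := by positivity
    apply Bornology.IsBounded.subset (Metric.isBounded_closedBall (x := (0 : Fin 3 → ℝ))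
      (r := Real.sqrt B))
    intro x hx
    obtain ⟨he1, he2⟩ := hx
    have key : c1 * (x 1)^2 + c2 * (x 2)^2 = 1 := by
      rw [hc1def, hc2def]
      field_simp at he2 ⊢
      linear_combination (a1-lam)*(a2-lam)*he1 - he2
    have h1c : 0 < 1/c1 := by positivity
    have h2c : 0 < 1/c2 := by positivity
    have hb1 : (x 1)^2 ≤ 1 / c1 := by
      rw [le_div_iff₀ hc1]; nlinarith [sq_nonneg (x 2)]
    have hb2 : (x 2)^2 ≤ 1 / c2 := by
      rw [le_div_iff₀ hc2]; nlinarith [sq_nonneg (x 1)]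
    have hb0 : (x 0)^2 ≤ 1/c1 + 1/c2 := by nlinarith
    have hall : ∀ i : Fin 3, (x i)^2 ≤ B := by
      intro i
      fin_cases i
      · show (x 0)^2 ≤ B
        rw [hBdef]; linarith
      · show (x 1)^2 ≤ B
        rw [hBdef]; linarith
      · show (x 2)^2 ≤ B
        rw [hBdef]; linarith
    rw [Metric.mem_closedBall, dist_zero_right]
    apply pi_norm_le_iff_of_nonneg (Real.sqrt_nonneg B) |>.mpr
    intro i
    rw [Real.norm_eq_abs, ← Real.sqrt_sq_eq_abs]
    exact Real.sqrt_le_sqrt (hall i)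
  · -- unbounded part
    intro hcase hb
    obtain ⟨r, hr⟩ := hb.subset_closedBall 0
    set t : ℝ := max 1 (|r| + 1) with htdef
    have ht1 : (1:ℝ) ≤ t := le_max_left _ _
    have htr : r < t := lt_of_lt_of_le (by cases abs_cases r <;> linarith) (le_max_right _ _)
    have hsigns : ((a1 - lam - (a0 - lam)) / (a1 - lam) < 0 ∧
        0 < (a2 - lam - (a0 - lam)) / (a2 - lam)) ∨
        ((a2 - lam - (a0 - lam)) / (a2 - lam) < 0 ∧
        0 < (a1 - lam - (a0 - lam)) / (a1 - lam)) := by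
      rcases hcase with ⟨hA, hB', hC, hD, hE⟩ | ⟨hA, hB', hC, hD⟩
      · exact Or.inl ⟨div_neg_of_pos_of_neg (by linarith) (by linarith),
          div_pos (by linarith) (by linarith)⟩
      · rcases hD with hD | hD
        · exact Or.inl ⟨div_neg_of_neg_of_pos (by linarith) (by linarith),
            div_pos (by linarith) (by linarith)⟩
        · exact Or.inr ⟨div_neg_of_pos_of_neg (by linarith) (by linarith),
            div_pos_of_neg_of_neg (by linarith) (by linarith)⟩
    rcases hsigns with ⟨hs1, hs2⟩ | ⟨hs1, hs2⟩
    · obtain ⟨u, v, w, he1, he2, hu⟩ :=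
        construct_point (a0 - lam) (a1 - lam) (a2 - lam) t h0 h1 h2 hs1 hs2 ht1
      have hmem : (![w, u, v] : Fin 3 → ℝ) ∈ C := by
        refine ⟨?_, ?_⟩ <;> simp only [Matrix.cons_val_zero, Matrix.cons_val_one,
          Matrix.head_cons, Matrix.cons_val_two, Matrix.tail_cons] <;> linarith
      have hball := hr hmem
      rw [Metric.mem_closedBall, dist_zero_right] at hball
      have hle : |u| ≤ ‖(![w, u, v] : Fin 3 → ℝ)‖ := by
        simpa using norm_le_pi_norm (![w, u, v] : Fin 3 → ℝ) 1
      linarith [hu.trans hle]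
    · obtain ⟨u, v, w, he1, he2, hu⟩ :=
        construct_point (a0 - lam) (a2 - lam) (a1 - lam) t h0 h2 h1 hs1 hs2 ht1
      have hmem : (![w, v, u] : Fin 3 → ℝ) ∈ C := by
        refine ⟨?_, ?_⟩ <;> simp only [Matrix.cons_val_zero, Matrix.cons_val_one,
          Matrix.head_cons, Matrix.cons_val_two, Matrix.tail_cons] <;> linarith
      have hball := hr hmem
      rw [Metric.mem_closedBall, dist_zero_right] at hball
      have hle : |u| ≤ ‖(![w, v, u] : Fin 3 → ℝ)‖ := by
        simpa using norm_le_pi_norm (![w, v, u] : Fin 3 → ℝ) 2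
      linarith [hu.trans hle]
end
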